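/- Let Pₙ be the path with n vertices. Then its covered components polynomial satisfies, for n > 1, the recurrence C(Pₙ) = (x+y)·C(Pₙ₋₁) + (xyz − xy)·C(Pₙ₋₂) with C(P₀) = 1 and C(P₁) = x, and the explicit formula C(Pₙ,x,y,z) = xⁿ + ∑_{i=1}^{n−1} x^{n−i} y^{i} ∑_{k=1}^{min(i, n−i)} C(i−1,k−1)·C(n−i,k)·z^{k}, where C(a,b) denotes the binomial coefficient. -/

import Mathlib

open MvPolynomial Finset
open scoped Classical

noncomputable section

variable {V : Type}

/-- The (finite) edge set of a simple graph on a finite vertex type, as a `Finset`. -/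
def edgeFinset' [Fintype V] (G : SimpleGraph V) : Finset (Sym2 V) :=
  (Set.toFinite G.edgeSet).toFinset

/-- `k(G)`: the number of connected components of `G`. -/
def kG (G : SimpleGraph V) : ℕ := Nat.card G.ConnectedComponent

/-- `c(G)`: the number of covered components of `G`, i.e. connected components
containing at least one edge. -/
def cG (G : SimpleGraph V) : ℕ :=
  Nat.card {c : G.ConnectedComponent // ∃ v w, G.Adj v w ∧ G.connectedComponentMk v = c}

/-- The covered components polynomial
`C(G,x,y,z) = ∑_{A ⊆ E} x^{k(⟨A⟩)} y^{|A|} z^{c(⟨A⟩)}` of a finite simple graph, where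
`⟨A⟩` denotes the spanning subgraph with edge set `A`, and `x = X 0`, `y = X 1`,
`z = X 2`. -/
def ccp [Fintype V] (G : SimpleGraph V) : MvPolynomial (Fin 3) ℤ :=
  ∑ A ∈ (edgeFinset' G).powerset,
    X 0 ^ kG (SimpleGraph.fromEdgeSet (A : Set (Sym2 V))) * X 1 ^ A.card *
      X 2 ^ cG (SimpleGraph.fromEdgeSet (A : Set (Sym2 V)))

/-- `[x^i y^j z^k] P`: the coefficient of the monomial `x^i y^j z^k`. -/
def coeff3 (P : MvPolynomial (Fin 3) ℤ) (i j k : ℕ) : ℤ :=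
  MvPolynomial.coeff (Finsupp.single 0 i + Finsupp.single 1 j + Finsupp.single 2 k) P

/-- `Pₙ`: the path with `n` vertices `0, 1, …, n−1` and edges `{i, i+1}`. -/
def pathG (n : ℕ) : SimpleGraph (Fin n) :=
  SimpleGraph.fromRel (fun i j => (i : ℕ) + 1 = (j : ℕ))

/-!
Encode an edge set of `Pₙ` by the set `S` of indices `i` of its edges `{i, i + 1}`. Labelling
each vertex by the first vertex of its run of consecutive edges (`runStart`) separates the
components of the spanning subgraph, so it has `n - |S|` components, of which `runCount S` (the number of
maximal runs of `S`) are covered. Splitting the sum over `S` by whether the last one or two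
edges lie in `S` gives the recurrence. The explicit polynomial satisfies the same recurrence,
since its coefficients do by Pascal's rule, and has the same initial values.
-/

/-- `runStart S v` is the least `u ≤ v` with `[u, v) ⊆ S`. -/
def runStart (S : Finset ℕ) : ℕ → ℕ
  | 0 => 0
  | v + 1 => if v ∈ S then runStart S v else v + 1

/-- The number of maximal runs of consecutive integers in `S`, counted by their least elements. -/
def runCount (S : Finset ℕ) : ℕ := #{i ∈ S | i = 0 ∨ i - 1 ∉ S}

section runStart

variable (S : Finset ℕ)

lemma runStart_le (v : ℕ) : runStart S v ≤ v := by
  induction v with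
  | zero => simp [runStart]
  | succ v ih => rw [runStart]; split <;> omega

lemma runStart_succ_of_mem {v : ℕ} (hv : v ∈ S) : runStart S (v + 1) = runStart S v := by
  simp [runStart, hv]

lemma runStart_eq_self_iff (v : ℕ) : runStart S v = v ↔ v = 0 ∨ v - 1 ∉ S := by
  cases v with
  | zero => simp [runStart]
  | succ v =>
    by_cases hv : v ∈ S
    · have := runStart_le S v
      simp only [runStart_succ_of_mem S hv, Nat.add_sub_cancel, hv, not_true_eq_false, or_false,
        Nat.add_one_ne_zero, iff_false]
      omega
    · simp [runStart, hv]

lemma runStart_runStart (v : ℕ) : runStart S (runStart S v) = runStart S v := by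
  induction v with
  | zero => simp [runStart]
  | succ v ih => rw [runStart]; split <;> simp_all [runStart]

lemma runStart_mem {v : ℕ} (hv : v ∈ S) : runStart S v ∈ S := by
  induction v with
  | zero => simpa [runStart]
  | succ v ih => rw [runStart]; split <;> simp_all

lemma runCount_insert {m : ℕ} (hS : ∀ i ∈ S, i < m) :
    runCount (insert m S) = runCount S + if m = 0 ∨ m - 1 ∉ S then 1 else 0 := by
  have hm : m ∉ S := fun h => (hS m h).false
  have hfilter : {i ∈ S | i = 0 ∨ i - 1 ∉ insert m S} = {i ∈ S | i = 0 ∨ i - 1 ∉ S} :=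
    filter_congr fun i hi => by
      have : i - 1 ≠ m := by have := hS i hi; omega
      simp [this]
  unfold runCount
  rw [filter_insert, hfilter]
  rcases Nat.eq_zero_or_pos m with rfl | hm0
  · simp [card_insert_of_notMem, hm]
  · have : m - 1 ≠ m := by omega
    by_cases h : m - 1 ∈ S <;> simp [h, this, hm, card_insert_of_notMem, hm0.ne']

end runStart

section components

variable {V α : Type} {G : SimpleGraph V} (f : V → α)
  (hf : ∀ u v, G.Reachable u v ↔ f u = f v)
include hf

def componentLabel : G.ConnectedComponent → α :=
  SimpleGraph.ConnectedComponent.lift f fun u v p _ => (hf u v).1 ⟨p⟩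

lemma componentLabel_injective : Function.Injective (componentLabel f hf) := by
  refine SimpleGraph.ConnectedComponent.ind₂ fun u v h => ?_
  exact SimpleGraph.ConnectedComponent.sound ((hf u v).2 h)

lemma kG_eq_card_range : kG G = Nat.card (Set.range f) := by
  rw [kG, ← Nat.card_range_of_injective (componentLabel_injective f hf)]
  have : Set.range (componentLabel f hf) = Set.range f :=
    (Quot.mk_surjective.range_comp (componentLabel f hf)).symm
  rw [this]

lemma cG_eq_card_image : cG G = Nat.card (f '' {v | ∃ w, G.Adj v w}) := by
  rw [cG, ← Set.coe_ofPred, ← Nat.card_image_of_injective (componentLabel_injective f hf)]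
  congr 2
  ext a
  simp [componentLabel]

end components

def runGraph (S : Finset ℕ) (n : ℕ) : SimpleGraph (Fin (n + 1)) :=
  SimpleGraph.fromRel fun a b => (a : ℕ) ∈ S ∧ (a : ℕ) + 1 = b

section runGraph

variable {S : Finset ℕ} {n : ℕ}

lemma runGraph_adj {a b : Fin (n + 1)} :
    (runGraph S n).Adj a b ↔
      (↑a ∈ S ∧ (a : ℕ) + 1 = b) ∨ (↑b ∈ S ∧ (b : ℕ) + 1 = a) := by
  rw [runGraph, SimpleGraph.fromRel_adj, and_iff_right_iff_imp]
  rintro (⟨-, h⟩ | ⟨-, h⟩) rfl <;> omega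

lemma reachable_runStart (v : Fin (n + 1)) :
    (runGraph S n).Reachable v ⟨runStart S v, (runStart_le S v).trans_lt v.2⟩ := by
  obtain ⟨v, hv⟩ := v
  induction v with
  | zero => rfl
  | succ v ih =>
    by_cases hvS : v ∈ S
    · have hadj : (runGraph S n).Adj ⟨v + 1, hv⟩ ⟨v, by omega⟩ :=
        runGraph_adj.2 (.inr ⟨hvS, rfl⟩)
      simpa [runStart_succ_of_mem S hvS] using hadj.reachable.trans (ih (by omega))
    · simp [runStart, hvS]

lemma reachable_runGraph_iff {a b : Fin (n + 1)} :
    (runGraph S n).Reachable a b ↔ runStart S a = runStart S b := by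
  constructor
  · rintro ⟨p⟩
    induction p with
    | nil => rfl
    | cons hadj _ ih =>
      rw [← ih]
      rcases runGraph_adj.1 hadj with ⟨hS, h⟩ | ⟨hS, h⟩ <;>
        rw [← h, runStart_succ_of_mem S hS]
  · intro h
    refine (reachable_runStart a).trans ?_
    simpa [h] using (reachable_runStart b).symm

lemma kG_runGraph (hS : S ⊆ range n) : kG (runGraph S n) = n + 1 - #S := by
  rw [kG_eq_card_range _ fun _ _ => reachable_runGraph_iff]
  have hrange : Set.range (fun v : Fin (n + 1) => runStart S v) =
      ↑{u ∈ range (n + 1) | runStart S u = u} := by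
    ext u
    simp only [Set.mem_range, coe_filter, mem_range, Set.mem_ofPred_eq]
    constructor
    · rintro ⟨v, rfl⟩
      exact ⟨(runStart_le S v).trans_lt v.2, runStart_runStart S v⟩
    · rintro ⟨hu, hfix⟩
      exact ⟨⟨u, hu⟩, hfix⟩
  have hmoved : {u ∈ range (n + 1) | ¬runStart S u = u} = S.image (· + 1) := by
    ext u
    simp only [mem_filter, mem_range, mem_image, runStart_eq_self_iff]
    constructor
    · rintro ⟨hu, h⟩
      exact ⟨u - 1, by tauto, by omega⟩
    · rintro ⟨i, hi, rfl⟩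
      have := mem_range.1 (hS hi)
      simpa [hi] using this
  have hsplit := card_filter_add_card_filter_not (s := range (n + 1)) (fun u => runStart S u = u)
  rw [hmoved, card_image_of_injective _ (add_left_injective 1), card_range] at hsplit
  rw [hrange, Nat.card_coe_set_eq, Set.ncard_coe_finset]
  omega

lemma cG_runGraph (hS : S ⊆ range n) : cG (runGraph S n) = runCount S := by
  rw [cG_eq_card_image _ fun _ _ => reachable_runGraph_iff]
  have himage : (fun v : Fin (n + 1) => runStart S v) '' {v | ∃ w, (runGraph S n).Adj v w} =
      ↑{u ∈ S | runStart S u = u} := by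
    ext u
    simp only [Set.mem_image, Set.mem_ofPred_eq, coe_filter, runGraph_adj]
    constructor
    · rintro ⟨v, ⟨w, ⟨hv, -⟩ | ⟨hw, hwv⟩⟩, rfl⟩
      · exact ⟨runStart_mem S hv, runStart_runStart S v⟩
      · rw [← hwv, runStart_succ_of_mem S hw]
        exact ⟨runStart_mem S hw, runStart_runStart S w⟩
    · rintro ⟨hu, hfix⟩
      have := mem_range.1 (hS hu)
      exact ⟨⟨u, by omega⟩, ⟨⟨u + 1, by omega⟩, .inl ⟨hu, rfl⟩⟩, hfix⟩
  rw [himage, Nat.card_coe_set_eq, Set.ncard_coe_finset, runCount]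
  simp_rw [runStart_eq_self_iff]

end runGraph

/-- `Fin.ofNat` wraps around, so this is an edge of the path only for `i < n`. -/
def pathEdge (n i : ℕ) : Sym2 (Fin (n + 1)) :=
  s(Fin.ofNat (n + 1) i, Fin.ofNat (n + 1) (i + 1))

section pathEdge

variable {S : Finset ℕ} {n : ℕ}

lemma pathEdge_eq_mk_iff {i : ℕ} (hi : i < n) {a b : Fin (n + 1)} :
    pathEdge n i = s(a, b) ↔ (↑a = i ∧ ↑b = i + 1) ∨ (↑b = i ∧ ↑a = i + 1) := by
  simp only [pathEdge, Sym2.eq_iff, Fin.ext_iff, Fin.val_ofNat,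
    Nat.mod_eq_of_lt (show i < n + 1 by omega), Nat.mod_eq_of_lt (show i + 1 < n + 1 by omega)]
  omega

lemma injOn_pathEdge : Set.InjOn (pathEdge n) (range n) := by
  intro i hi j hj h
  have hj' := mem_range.1 hj
  have := (pathEdge_eq_mk_iff (mem_range.1 hi)).1 h
  simp only [Fin.val_ofNat, Nat.mod_eq_of_lt (show j < n + 1 by omega),
    Nat.mod_eq_of_lt (show j + 1 < n + 1 by omega)] at this
  omega

lemma edgeSet_runGraph (hS : S ⊆ range n) :
    (runGraph S n).edgeSet = ↑(S.image (pathEdge n)) := by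
  ext e
  induction e with
  | h a b =>
    simp only [SimpleGraph.mem_edgeSet, runGraph_adj, coe_image, Set.mem_image, mem_coe]
    constructor
    · rintro (⟨ha, h⟩ | ⟨hb, h⟩)
      · exact ⟨a, ha, (pathEdge_eq_mk_iff (mem_range.1 (hS ha))).2 (.inl ⟨rfl, h.symm⟩)⟩
      · exact ⟨b, hb, (pathEdge_eq_mk_iff (mem_range.1 (hS hb))).2 (.inr ⟨rfl, h.symm⟩)⟩
    · rintro ⟨i, hi, he⟩
      rcases (pathEdge_eq_mk_iff (mem_range.1 (hS hi))).1 he with ⟨ha, hb⟩ | ⟨hb, ha⟩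
      · exact .inl ⟨ha ▸ hi, by omega⟩
      · exact .inr ⟨hb ▸ hi, by omega⟩

lemma pathG_succ : pathG (n + 1) = runGraph (range n) n := by
  ext a b
  simp only [pathG, SimpleGraph.fromRel_adj, runGraph_adj, mem_range]
  omega

end pathEdge

def runMonomial (n : ℕ) (S : Finset ℕ) : MvPolynomial (Fin 3) ℤ :=
  X 0 ^ (n - #S) * X 1 ^ #S * X 2 ^ runCount S

/-- `C(Pₙ)`, summed over the index sets `{i | {i, i + 1} ∈ A}` of the edge sets `A`. -/
def runPoly (n : ℕ) : MvPolynomial (Fin 3) ℤ :=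
  ∑ S ∈ (range (n - 1)).powerset, runMonomial n S

lemma ccp_of_isEmpty {V : Type} [Fintype V] [IsEmpty V] (G : SimpleGraph V) : ccp G = 1 := by
  have hE : edgeFinset' G = ∅ := eq_empty_of_forall_notMem fun e => e.ind fun a => isEmptyElim a
  simp [ccp, hE, kG, cG]

lemma ccp_pathG (n : ℕ) : ccp (pathG n) = runPoly n := by
  cases n with
  | zero => simp [ccp_of_isEmpty, runPoly, runMonomial, runCount]
  | succ n =>
    have hE : edgeFinset' (pathG (n + 1)) = (range n).image (pathEdge n) := by
      rw [← coe_inj, edgeFinset', Set.Finite.coe_toFinset, pathG_succ,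
        edgeSet_runGraph subset_rfl]
    rw [ccp, hE, powerset_image, sum_image (image_injOn_powerset_of_injOn injOn_pathEdge),
      runPoly, Nat.add_sub_cancel]
    refine sum_congr rfl fun S hS => ?_
    replace hS : S ⊆ range n := mem_powerset.1 hS
    rw [← edgeSet_runGraph hS, SimpleGraph.fromEdgeSet_edgeSet, kG_runGraph hS, cG_runGraph hS,
      card_image_of_injOn (injOn_pathEdge.mono hS), runMonomial]

section runMonomial

variable {S : Finset ℕ} {j : ℕ}

lemma runMonomial_succ {n : ℕ} (h : #S ≤ n) :
    runMonomial (n + 1) S = X 0 * runMonomial n S := by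
  rw [runMonomial, runMonomial, Nat.sub_add_comm h, pow_succ]
  ring

lemma card_le_of_subset_range {n : ℕ} (h : S ⊆ range n) : #S ≤ n := by
  simpa using card_le_card h

lemma runMonomial_insert_of_gap (hS : S ⊆ range j) :
    runMonomial (j + 3) (insert (j + 1) S) = X 0 * X 1 * X 2 * runMonomial (j + 1) S := by
  have hlt : ∀ i ∈ S, i < j + 1 := fun i hi => by have := mem_range.1 (hS hi); omega
  have hj : j ∉ S := fun h => by simpa using hS h
  have hcard := card_le_of_subset_range hS
  rw [runMonomial, runMonomial, runCount_insert S hlt, card_insert_of_notMem (fun h => by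
    simpa using hlt _ h)]
  simp only [Nat.add_sub_cancel, hj, not_false_eq_true, or_true, if_true]
  rw [show j + 3 - (#S + 1) = j + 1 - #S + 1 by omega]
  ring

lemma runMonomial_insert_of_adjacent (hS : S ⊆ range j) :
    runMonomial (j + 3) (insert (j + 1) (insert j S)) =
      X 1 * runMonomial (j + 2) (insert j S) := by
  have hlt : ∀ i ∈ insert j S, i < j + 1 := fun i hi => by
    rcases mem_insert.1 hi with rfl | hi
    · omega
    · have := mem_range.1 (hS hi); omega
  have hcard : #(insert j S) ≤ j + 1 :=
    (card_insert_le j S).trans (by have := card_le_of_subset_range hS; omega)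
  rw [runMonomial, runMonomial, runCount_insert _ hlt, card_insert_of_notMem (fun h => by
    simpa using hlt _ h)]
  simp only [Nat.add_sub_cancel, mem_insert_self, not_true_eq_false, or_false,
    Nat.add_one_ne_zero, if_false, add_zero]
  rw [show j + 3 - (#(insert j S) + 1) = j + 2 - #(insert j S) by omega]
  ring

end runMonomial

lemma runPoly_zero : runPoly 0 = 1 := by simp [runPoly, runMonomial, runCount]

lemma runPoly_one : runPoly 1 = X 0 := by simp [runPoly, runMonomial, runCount]

lemma runPoly_add_two_eq_add_sum (n : ℕ) : runPoly (n + 2) =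
    X 0 * runPoly (n + 1) + ∑ S ∈ (range n).powerset, runMonomial (n + 2) (insert n S) := by
  rw [runPoly, runPoly, show n + 2 - 1 = n + 1 from rfl, Nat.add_sub_cancel, range_add_one,
    sum_powerset_insert notMem_range_self, mul_sum]
  congr 1
  exact sum_congr rfl fun S hS =>
    runMonomial_succ ((card_le_of_subset_range (mem_powerset.1 hS)).trans (by omega))

lemma runPoly_add_two (m : ℕ) :
    runPoly (m + 2) =
      (X 0 + X 1) * runPoly (m + 1) + (X 0 * X 1 * X 2 - X 0 * X 1) * runPoly m := by
  rcases m with _ | j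
  · have h0 : runMonomial 2 {0} = X 0 * X 1 * X 2 := by
      simp [runMonomial, runCount, filter_singleton]
    rw [runPoly_add_two_eq_add_sum, runPoly_one, runPoly_zero, range_zero, powerset_empty,
      sum_singleton, insert_empty, h0]
    ring
  have hprev := runPoly_add_two_eq_add_sum j
  rw [runPoly_add_two_eq_add_sum (j + 1), range_add_one, sum_powerset_insert notMem_range_self,
    sum_congr rfl fun S hS => runMonomial_insert_of_gap (mem_powerset.1 hS),
    sum_congr rfl fun S hS => runMonomial_insert_of_adjacent (mem_powerset.1 hS),
    ← mul_sum, ← mul_sum,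
    show ∑ S ∈ (range j).powerset, runMonomial (j + 1) S = runPoly (j + 1) from rfl]
  linear_combination (-X 1) * hprev

/-- The coefficient of `x^{n-i} y^i z^k` in `C(Pₙ)`. -/
def pathCoeff (n : ℕ) : ℕ → ℕ → ℕ
  | 0, 0 => 1
  | i + 1, k + 1 => i.choose k * (n - (i + 1)).choose (k + 1)
  | _, _ => 0

def shiftY (c : ℕ → ℕ → ℕ) : ℕ → ℕ → ℕ
  | 0, _ => 0
  | i + 1, k => c i k

def shiftYZ (c : ℕ → ℕ → ℕ) : ℕ → ℕ → ℕ
  | i + 1, k + 1 => c i k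
  | _, _ => 0

lemma pathCoeff_eq_zero_of_notMem {n i k : ℕ} (hi : 0 < i) (hk : k ∉ Icc 1 (min i (n - i))) :
    pathCoeff n i k = 0 := by
  obtain ⟨i, rfl⟩ : ∃ i', i = i' + 1 := ⟨i - 1, by omega⟩
  rcases k with _ | k
  · rfl
  have : i < k ∨ n - (i + 1) < k + 1 := by rw [mem_Icc] at hk; omega
  rcases this with h | h <;> simp [pathCoeff, Nat.choose_eq_zero_of_lt h]

lemma pathCoeff_add_two (m : ℕ) : pathCoeff (m + 2) + shiftY (pathCoeff m) =
    pathCoeff (m + 1) + shiftY (pathCoeff (m + 1)) + shiftYZ (pathCoeff m) := by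
  funext i k
  simp only [Pi.add_apply]
  rcases i with _ | _ | j <;> rcases k with _ | _ | l <;>
    simp only [pathCoeff, shiftY, shiftYZ, zero_add, add_zero, Nat.add_one_sub_one,
      add_tsub_cancel_right, Nat.reduceSubDiff, Nat.choose_self, Nat.choose_zero_right,
      Nat.choose_zero_succ, Nat.choose_one_right, one_mul, zero_mul]
  · omega
  rcases Nat.lt_or_ge j m with h | h
  · rw [show m - j = m - (j + 1) + 1 by omega, Nat.choose_succ_succ' (m - (j + 1)),
      Nat.choose_succ_succ' j]
    ring
  · simp [show m - j = 0 by omega, show m - (j + 1) = 0 by omega]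

def boxPoly (n : ℕ) (c : ℕ → ℕ → ℕ) : MvPolynomial (Fin 3) ℤ :=
  ∑ i ∈ range (n + 1), X 0 ^ (n - i) * X 1 ^ i *
    ∑ k ∈ range (n + 1), (c i k : MvPolynomial (Fin 3) ℤ) * X 2 ^ k

def VanishesOutside (n : ℕ) (c : ℕ → ℕ → ℕ) : Prop :=
  ∀ i k, n < i ∨ n < k → c i k = 0

section boxPoly

variable {n : ℕ} {c : ℕ → ℕ → ℕ}

lemma VanishesOutside.shiftY (hc : VanishesOutside n c) :
    VanishesOutside (n + 1) (shiftY c) := by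
  rintro (_ | i) k h
  · rfl
  · exact hc i k (by omega)

lemma VanishesOutside.shiftYZ (hc : VanishesOutside n c) :
    VanishesOutside (n + 1) (shiftYZ c) := by
  rintro (_ | i) (_ | k) h
  any_goals rfl
  exact hc i k (by omega)

lemma vanishesOutside_pathCoeff (n : ℕ) : VanishesOutside n (pathCoeff n) := by
  rintro (_ | i) k h
  · rcases k with _ | k
    · omega
    · rfl
  · exact pathCoeff_eq_zero_of_notMem (Nat.succ_pos i) (by rw [mem_Icc]; omega)

lemma boxPoly_add (d : ℕ → ℕ → ℕ) : boxPoly n (c + d) = boxPoly n c + boxPoly n d := by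
  simp only [boxPoly, Pi.add_apply, Nat.cast_add, add_mul, sum_add_distrib, mul_add]

lemma sum_range_succ_of_vanishesOutside (hc : VanishesOutside n c) (i : ℕ) :
    ∑ k ∈ range (n + 2), (c i k : MvPolynomial (Fin 3) ℤ) * X 2 ^ k =
      ∑ k ∈ range (n + 1), (c i k : MvPolynomial (Fin 3) ℤ) * X 2 ^ k := by
  rw [sum_range_succ, hc i (n + 1) (.inr (by omega)), Nat.cast_zero, zero_mul, add_zero]

lemma X_zero_mul_boxPoly (hc : VanishesOutside n c) :
    X 0 * boxPoly n c = boxPoly (n + 1) c := by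
  rw [boxPoly, boxPoly, sum_range_succ _ (n + 1), mul_sum]
  simp only [hc (n + 1) _ (.inl (by omega)), Nat.cast_zero, zero_mul, sum_const_zero, mul_zero,
    add_zero, sum_range_succ_of_vanishesOutside hc]
  refine sum_congr rfl fun i hi => ?_
  rw [show n + 1 - i = n - i + 1 by have := mem_range.1 hi; omega, pow_succ]
  ring

lemma X_one_mul_boxPoly (hc : VanishesOutside n c) :
    X 1 * boxPoly n c = boxPoly (n + 1) (shiftY c) := by
  rw [boxPoly, boxPoly, sum_range_succ' _ (n + 1), mul_sum]
  simp only [shiftY, Nat.cast_zero, zero_mul, sum_const_zero, mul_zero, add_zero,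
    sum_range_succ_of_vanishesOutside hc, Nat.add_sub_add_right]
  refine sum_congr rfl fun i _ => ?_
  ring

lemma X_one_mul_X_two_mul_boxPoly : X 1 * X 2 * boxPoly n c = boxPoly (n + 1) (shiftYZ c) := by
  rw [boxPoly, boxPoly, sum_range_succ' _ (n + 1), mul_sum]
  simp only [shiftYZ, Nat.cast_zero, zero_mul, sum_const_zero, mul_zero, add_zero,
    Nat.add_sub_add_right]
  refine sum_congr rfl fun i _ => ?_
  rw [sum_range_succ' _ (n + 1), mul_sum, mul_sum]
  simp only [Nat.cast_zero, zero_mul, add_zero, mul_sum]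
  refine sum_congr rfl fun k _ => ?_
  ring

end boxPoly

lemma boxPoly_pathCoeff_add_two (m : ℕ) :
    boxPoly (m + 2) (pathCoeff (m + 2)) =
      (X 0 + X 1) * boxPoly (m + 1) (pathCoeff (m + 1)) +
        (X 0 * X 1 * X 2 - X 0 * X 1) * boxPoly m (pathCoeff m) := by
  have h := congrArg (boxPoly (m + 2)) (pathCoeff_add_two m)
  have hm := vanishesOutside_pathCoeff m
  have hm1 := vanishesOutside_pathCoeff (m + 1)
  simp only [boxPoly_add] at h
  rw [← X_zero_mul_boxPoly hm1, ← X_one_mul_boxPoly hm1, ← X_zero_mul_boxPoly hm.shiftY,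
    ← X_one_mul_boxPoly hm, ← X_zero_mul_boxPoly hm.shiftYZ,
    ← X_one_mul_X_two_mul_boxPoly] at h
  linear_combination h

lemma runPoly_eq_boxPoly (n : ℕ) : runPoly n = boxPoly n (pathCoeff n) := by
  induction n using Nat.twoStepInduction with
  | zero => simp [runPoly_zero, boxPoly, pathCoeff]
  | one => simp [runPoly_one, boxPoly, pathCoeff, sum_range_succ]
  | more m h0 h1 => rw [runPoly_add_two, boxPoly_pathCoeff_add_two, h0, h1]

lemma boxPoly_pathCoeff (n : ℕ) : boxPoly n (pathCoeff n) =
    X 0 ^ n + ∑ i ∈ Icc 1 (n - 1), X 0 ^ (n - i) * X 1 ^ i *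
      ∑ k ∈ Icc 1 (min i (n - i)),
        (((i - 1).choose (k - 1) * (n - i).choose k : ℕ) : MvPolynomial (Fin 3) ℤ) *
          X 2 ^ k := by
  rcases Nat.eq_zero_or_pos n with rfl | hn
  · simp [boxPoly, pathCoeff]
  have hsub : insert 0 (Icc 1 (n - 1)) ⊆ range (n + 1) := by
    intro i hi; simp only [mem_insert, mem_Icc, mem_range] at hi ⊢; omega
  rw [boxPoly, ← sum_subset hsub, sum_insert (by simp)]
  · congr 1
    · simp [pathCoeff, sum_range_succ']
    refine sum_congr rfl fun i hi => ?_
    have hi := mem_Icc.1 hi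
    congr 1
    have hsub' : Icc 1 (min i (n - i)) ⊆ range (n + 1) := by
      intro k hk; simp only [mem_Icc, mem_range] at hk ⊢; omega
    rw [← sum_subset hsub']
    · refine sum_congr rfl fun k hk => ?_
      obtain ⟨i, rfl⟩ : ∃ i', i = i' + 1 := ⟨i - 1, by omega⟩
      obtain ⟨k, rfl⟩ : ∃ k', k = k' + 1 := ⟨k - 1, by have := mem_Icc.1 hk; omega⟩
      rfl
    · intro k _ hk
      rw [pathCoeff_eq_zero_of_notMem (by omega) hk, Nat.cast_zero, zero_mul]
  · intro i hi hi'
    have hin : i = n := by simp only [mem_insert, mem_Icc, mem_range] at hi hi'; omega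
    subst hin
    refine mul_eq_zero_of_right _ (sum_eq_zero fun k _ => ?_)
    rw [pathCoeff_eq_zero_of_notMem hn (by simp), Nat.cast_zero, zero_mul]

/-- The covered components polynomial of the path `Pₙ` satisfies, for
`n > 1`, the recurrence `C(Pₙ) = (x+y)·C(Pₙ₋₁) + (xyz − xy)·C(Pₙ₋₂)` with `C(P₀) = 1`
and `C(P₁) = x`, and the explicit formula
`C(Pₙ) = xⁿ + ∑_{i=1}^{n−1} x^{n−i} yⁱ ∑_{k=1}^{min(i,n−i)} C(i−1,k−1)·C(n−i,k)·z^k`. -/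
theorem ccp_path :
    (∀ n : ℕ, 1 < n →
      ccp (pathG n) = (X 0 + X 1) * ccp (pathG (n - 1)) +
        (X 0 * X 1 * X 2 - X 0 * X 1) * ccp (pathG (n - 2))) ∧
    ccp (pathG 0) = 1 ∧ ccp (pathG 1) = X 0 ∧
    (∀ n : ℕ, ccp (pathG n) =
      X 0 ^ n + ∑ i ∈ Finset.Icc 1 (n - 1), X 0 ^ (n - i) * X 1 ^ i *
        ∑ k ∈ Finset.Icc 1 (min i (n - i)),
          (((i - 1).choose (k - 1) * (n - i).choose k : ℕ) : MvPolynomial (Fin 3) ℤ) *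
            X 2 ^ k) := by
  simp only [ccp_pathG]
  refine ⟨fun n hn => ?_, runPoly_zero, runPoly_one, fun n => ?_⟩
  · obtain ⟨m, rfl⟩ : ∃ m, n = m + 2 := ⟨n - 2, by omega⟩
    exact runPoly_add_two m
  · rw [runPoly_eq_boxPoly, boxPoly_pathCoeff]

end
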